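/- arXiv:1404.3816 — 2 statements merged into one kernel-verified Lean document; each statement's English description precedes it below -/
import Mathlib

section
/- Equivalence of covariance and cross-covariance recursions in the Kalman filter with a random-walk forecast model: Let H be an n×m real matrix, R an n×n real matrix, Q and P₀ m×m real matrices. Define the Kalman-filter covariance sequences by Pᵃ(0) = P₀ and, for each t ≥ 0, Pᶠ(t+1) = Pᵃ(t) + Q, K(t+1) = Pᶠ(t+1) Hᵀ (H Pᶠ(t+1) Hᵀ + R)⁻¹, Pᵃ(t+1) = Pᶠ(t+1) − K(t+1) H Pᶠ(t+1), assuming H Pᶠ(t+1) Hᵀ + R is invertible for every t. Define the HiKF cross-covariance sequences by Cᵃ(0) = P₀ Hᵀ and, for each t ≥ 0, Cᶠ(t+1) = Cᵃ(t) + Q Hᵀ, K'(t+1) = Cᶠ(t+1) (H Cᶠ(t+1) + R)⁻¹, Cᵃ(t+1) = Cᶠ(t+1) − K'(t+1) H Cᶠ(t+1). Then for every t ≥ 0 one has Cᵃ(t) = Pᵃ(t) Hᵀ, and for every t ≥ 1 one has Cᶠ(t) = Pᶠ(t) Hᵀ, H Cᶠ(t) + R = H Pᶠ(t) Hᵀ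 + R, and K'(t) = K(t). -/
open Matrix

/-!
Induction on `t` with the invariant `Cᵃ(t) = Pᵃ(t) Hᵀ`. Every step of the HiKF recursion is the
corresponding step of the Kalman recursion multiplied on the right by `Hᵀ`, and the Kalman
recursion only ever uses `P` through `P Hᵀ` and `H P Hᵀ = H (P Hᵀ)`; so the invariant passes
from `Cᵃ(t)` to `Cᶠ(t+1)`, then to the gain and to `Cᵃ(t+1)` by associativity alone.
-/

section CrossCovariance

variable {ι κ α : Type*} [Fintype ι] [CommRing α] (H : Matrix κ ι α) (R : Matrix κ κ α)

theorem innovation_eq_of_eq_mul_transpose {C : Matrix ι κ α} {P : Matrix ι ι α}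
    (h : C = P * Hᵀ) : H * C + R = H * P * Hᵀ + R := by
  rw [h, Matrix.mul_assoc]

theorem gain_eq_of_eq_mul_transpose [Fintype κ] [DecidableEq κ] {C : Matrix ι κ α}
    {P : Matrix ι ι α} (h : C = P * Hᵀ) :
    C * (H * C + R)⁻¹ = P * Hᵀ * (H * P * Hᵀ + R)⁻¹ := by
  rw [innovation_eq_of_eq_mul_transpose H R h, h]

theorem sub_gain_mul_mul_transpose [Fintype κ] (P : Matrix ι ι α) (K : Matrix ι κ α) :
    (P - K * (H * P)) * Hᵀ = P * Hᵀ - K * (H * (P * Hᵀ)) := by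
  rw [Matrix.sub_mul, Matrix.mul_assoc K, Matrix.mul_assoc H]

end CrossCovariance

theorem hikf_cross_covariance_equivalence_general {m n : ℕ}
    (H : Matrix (Fin n) (Fin m) ℝ) (R : Matrix (Fin n) (Fin n) ℝ)
    (Q P₀ : Matrix (Fin m) (Fin m) ℝ)
    (Pa Pf : ℕ → Matrix (Fin m) (Fin m) ℝ)
    (K : ℕ → Matrix (Fin m) (Fin n) ℝ)
    (Ca Cf K' : ℕ → Matrix (Fin m) (Fin n) ℝ)
    (hPa0 : Pa 0 = P₀)
    (hPf : ∀ t, Pf (t + 1) = Pa t + Q)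
    (hK : ∀ t, K (t + 1) = Pf (t + 1) * Hᵀ * (H * Pf (t + 1) * Hᵀ + R)⁻¹)
    (hPa : ∀ t, Pa (t + 1) = Pf (t + 1) - K (t + 1) * (H * Pf (t + 1)))
    (hCa0 : Ca 0 = P₀ * Hᵀ)
    (hCf : ∀ t, Cf (t + 1) = Ca t + Q * Hᵀ)
    (hK' : ∀ t, K' (t + 1) = Cf (t + 1) * (H * Cf (t + 1) + R)⁻¹)
    (hCa : ∀ t, Ca (t + 1) = Cf (t + 1) - K' (t + 1) * (H * Cf (t + 1))) :
    (∀ t, Ca t = Pa t * Hᵀ) ∧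
    (∀ t, 1 ≤ t →
      Cf t = Pf t * Hᵀ ∧
      H * Cf t + R = H * Pf t * Hᵀ + R ∧
      K' t = K t) := by
  have forecast : ∀ t, Ca t = Pa t * Hᵀ → Cf (t + 1) = Pf (t + 1) * Hᵀ := fun t h => by
    rw [hCf, h, hPf, Matrix.add_mul]
  have gain : ∀ t, Cf (t + 1) = Pf (t + 1) * Hᵀ → K' (t + 1) = K (t + 1) := fun t h => by
    rw [hK', hK, gain_eq_of_eq_mul_transpose H R h]
  have analysis : ∀ t, Ca t = Pa t * Hᵀ := by
    intro t
    induction t with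
    | zero => rw [hCa0, hPa0]
    | succ t ih =>
      have hCf_t := forecast t ih
      rw [hCa, hPa, gain t hCf_t, hCf_t, sub_gain_mul_mul_transpose]
  refine ⟨analysis, fun t ht => ?_⟩
  obtain ⟨s, rfl⟩ := Nat.exists_eq_add_of_le' ht
  have hCf_s := forecast s (analysis s)
  exact ⟨hCf_s, innovation_eq_of_eq_mul_transpose H R hCf_s, gain s hCf_s⟩

/-- Equivalence of the Kalman-filter covariance recursion and the HiKF
cross-covariance recursion under the random-walk forecast model. -/
theorem hikf_cross_covariance_equivalence {m n : ℕ}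
    (H : Matrix (Fin n) (Fin m) ℝ) (R : Matrix (Fin n) (Fin n) ℝ)
    (Q P₀ : Matrix (Fin m) (Fin m) ℝ)
    (Pa Pf : ℕ → Matrix (Fin m) (Fin m) ℝ)
    (K : ℕ → Matrix (Fin m) (Fin n) ℝ)
    (Ca Cf K' : ℕ → Matrix (Fin m) (Fin n) ℝ)
    (hPa0 : Pa 0 = P₀)
    (hPf : ∀ t, Pf (t + 1) = Pa t + Q)
    (hK : ∀ t, K (t + 1) = Pf (t + 1) * Hᵀ * (H * Pf (t + 1) * Hᵀ + R)⁻¹)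
    (hPa : ∀ t, Pa (t + 1) = Pf (t + 1) - K (t + 1) * (H * Pf (t + 1)))
    (hinv : ∀ t, IsUnit (H * Pf (t + 1) * Hᵀ + R))
    (hCa0 : Ca 0 = P₀ * Hᵀ)
    (hCf : ∀ t, Cf (t + 1) = Ca t + Q * Hᵀ)
    (hK' : ∀ t, K' (t + 1) = Cf (t + 1) * (H * Cf (t + 1) + R)⁻¹)
    (hCa : ∀ t, Ca (t + 1) = Cf (t + 1) - K' (t + 1) * (H * Cf (t + 1))) :
    (∀ t, Ca t = Pa t * Hᵀ) ∧
    (∀ t, 1 ≤ t →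
      Cf t = Pf t * Hᵀ ∧
      H * Cf t + R = H * Pf t * Hᵀ + R ∧
      K' t = K t) :=
  hikf_cross_covariance_equivalence_general H R Q P₀ Pa Pf K Ca Cf K' hPa0 hPf hK hPa hCa0 hCf hK'
    hCa
end

section
/- Equality of state estimates for the Kalman filter and the HiKF: Under the hypotheses of the covariance–cross-covariance equivalence (Pᵃ, Pᶠ, K defined by the Kalman recursion with Pᵃ(0) = P₀; Cᵃ, Cᶠ, K' defined by the HiKF recursion with Cᵃ(0) = P₀ Hᵀ; and H Pᶠ(t) Hᵀ + R invertible for all t ≥ 1), let y : ℕ → ℝⁿ be any sequence of measurement vectors and fix an initial estimate x̂₀ ∈ ℝᵐ. Define the Kalman-filter state sequence by x̂(0) = x̂₀ and x̂(t+1) = x̂(t) + K(t+1) (y(t+1) − H x̂(t)), and the HiKF state sequence by x̂'(0) = x̂₀ and x̂'(t+1) = x̂'(t) + K'(t+1) (y(t+1) − H x̂'(t)). Then x̂'(t) = x̂(t) for every t ≥ 0. -/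
/-!
The HiKF propagates `C = P Hᵀ` in place of the Kalman covariance `P`. Whenever `C = P Hᵀ`,
the HiKF gain `C (H C + R)⁻¹` is the Kalman gain `P Hᵀ (H P Hᵀ + R)⁻¹`, and the forecast and
analysis steps commute with right multiplication by `Hᵀ`. By induction the two filters use the
same gains at every step, so their state recursions coincide.
-/

open Matrix

section

variable {α k l : Type*} [Fintype k] [Fintype l]

theorem hikf_gain_eq_kalman_gain [CommRing α] [DecidableEq l] {H : Matrix l k α}
    {R : Matrix l l α} {P : Matrix k k α} {C : Matrix k l α} (hC : C = P * Hᵀ) :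
    C * (H * C + R)⁻¹ = P * Hᵀ * (H * P * Hᵀ + R)⁻¹ := by
  rw [hC, Matrix.mul_assoc H]

theorem hikf_analysis_eq_kalman_analysis_mul_transpose [Ring α] {H : Matrix l k α}
    {P : Matrix k k α} {C G : Matrix k l α} (hC : C = P * Hᵀ) :
    C - G * (H * C) = (P - G * (H * P)) * Hᵀ := by
  rw [hC, Matrix.sub_mul, Matrix.mul_assoc, Matrix.mul_assoc]

theorem hikf_cross_covariance_eq [CommRing α] [DecidableEq l] {H : Matrix l k α}
    {R : Matrix l l α} {Q P₀ : Matrix k k α}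
    {Pa Pf : ℕ → Matrix k k α} {K Ca Cf K' : ℕ → Matrix k l α}
    (hPa0 : Pa 0 = P₀)
    (hPf : ∀ t, Pf (t + 1) = Pa t + Q)
    (hK : ∀ t, K (t + 1) = Pf (t + 1) * Hᵀ * (H * Pf (t + 1) * Hᵀ + R)⁻¹)
    (hPa : ∀ t, Pa (t + 1) = Pf (t + 1) - K (t + 1) * (H * Pf (t + 1)))
    (hCa0 : Ca 0 = P₀ * Hᵀ)
    (hCf : ∀ t, Cf (t + 1) = Ca t + Q * Hᵀ)
    (hK' : ∀ t, K' (t + 1) = Cf (t + 1) * (H * Cf (t + 1) + R)⁻¹)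
    (hCa : ∀ t, Ca (t + 1) = Cf (t + 1) - K' (t + 1) * (H * Cf (t + 1))) :
    ∀ t, Ca t = Pa t * Hᵀ := by
  intro t
  induction t with
  | zero => rw [hCa0, hPa0]
  | succ t ih =>
    have hforecast : Cf (t + 1) = Pf (t + 1) * Hᵀ := by rw [hCf, hPf, ih, Matrix.add_mul]
    rw [hCa, hPa, hK' t, hikf_gain_eq_kalman_gain hforecast, ← hK,
      hikf_analysis_eq_kalman_analysis_mul_transpose hforecast]

theorem innovation_update_eq_of_gain_eq [Ring α] {H : Matrix l k α} {G G' : ℕ → Matrix k l α}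
    {y : ℕ → l → α} {x x' : ℕ → k → α} (hgain : ∀ t, G' (t + 1) = G (t + 1))
    (h0 : x' 0 = x 0)
    (hx : ∀ t, x (t + 1) = x t + G (t + 1) *ᵥ (y (t + 1) - H *ᵥ x t))
    (hx' : ∀ t, x' (t + 1) = x' t + G' (t + 1) *ᵥ (y (t + 1) - H *ᵥ x' t)) :
    ∀ t, x' t = x t := by
  intro t
  induction t with
  | zero => exact h0
  | succ t ih => rw [hx, hx', ih, hgain]

end

theorem hikf_state_estimate_equivalence_general {m n : ℕ}
    (H : Matrix (Fin n) (Fin m) ℝ) (R : Matrix (Fin n) (Fin n) ℝ)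
    (Q P₀ : Matrix (Fin m) (Fin m) ℝ)
    (Pa Pf : ℕ → Matrix (Fin m) (Fin m) ℝ)
    (K : ℕ → Matrix (Fin m) (Fin n) ℝ)
    (Ca Cf K' : ℕ → Matrix (Fin m) (Fin n) ℝ)
    (hPa0 : Pa 0 = P₀)
    (hPf : ∀ t, Pf (t + 1) = Pa t + Q)
    (hK : ∀ t, K (t + 1) = Pf (t + 1) * Hᵀ * (H * Pf (t + 1) * Hᵀ + R)⁻¹)
    (hPa : ∀ t, Pa (t + 1) = Pf (t + 1) - K (t + 1) * (H * Pf (t + 1)))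
    (hCa0 : Ca 0 = P₀ * Hᵀ)
    (hCf : ∀ t, Cf (t + 1) = Ca t + Q * Hᵀ)
    (hK' : ∀ t, K' (t + 1) = Cf (t + 1) * (H * Cf (t + 1) + R)⁻¹)
    (hCa : ∀ t, Ca (t + 1) = Cf (t + 1) - K' (t + 1) * (H * Cf (t + 1)))
    (y : ℕ → Fin n → ℝ) (x₀ : Fin m → ℝ)
    (x x' : ℕ → Fin m → ℝ)
    (hx0 : x 0 = x₀)
    (hx : ∀ t, x (t + 1) = x t + (K (t + 1)).mulVec (y (t + 1) - H.mulVec (x t)))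
    (hx'0 : x' 0 = x₀)
    (hx' : ∀ t, x' (t + 1) = x' t + (K' (t + 1)).mulVec (y (t + 1) - H.mulVec (x' t))) :
    ∀ t, x' t = x t := by
  have hC := hikf_cross_covariance_eq hPa0 hPf hK hPa hCa0 hCf hK' hCa
  have hgain : ∀ t, K' (t + 1) = K (t + 1) := fun t => by
    have hforecast : Cf (t + 1) = Pf (t + 1) * Hᵀ := by rw [hCf, hPf, hC, Matrix.add_mul]
    rw [hK', hK, hikf_gain_eq_kalman_gain hforecast]
  exact innovation_update_eq_of_gain_eq hgain (hx'0.trans hx0.symm) hx hx'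

/-- The HiKF state estimates coincide with the Kalman-filter state estimates. -/
theorem hikf_state_estimate_equivalence {m n : ℕ}
    (H : Matrix (Fin n) (Fin m) ℝ) (R : Matrix (Fin n) (Fin n) ℝ)
    (Q P₀ : Matrix (Fin m) (Fin m) ℝ)
    (Pa Pf : ℕ → Matrix (Fin m) (Fin m) ℝ)
    (K : ℕ → Matrix (Fin m) (Fin n) ℝ)
    (Ca Cf K' : ℕ → Matrix (Fin m) (Fin n) ℝ)
    (hPa0 : Pa 0 = P₀)
    (hPf : ∀ t, Pf (t + 1) = Pa t + Q)
    (hK : ∀ t, K (t + 1) = Pf (t + 1) * Hᵀ * (H * Pf (t + 1) * Hᵀ + R)⁻¹)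
    (hPa : ∀ t, Pa (t + 1) = Pf (t + 1) - K (t + 1) * (H * Pf (t + 1)))
    (hinv : ∀ t, IsUnit (H * Pf (t + 1) * Hᵀ + R))
    (hCa0 : Ca 0 = P₀ * Hᵀ)
    (hCf : ∀ t, Cf (t + 1) = Ca t + Q * Hᵀ)
    (hK' : ∀ t, K' (t + 1) = Cf (t + 1) * (H * Cf (t + 1) + R)⁻¹)
    (hCa : ∀ t, Ca (t + 1) = Cf (t + 1) - K' (t + 1) * (H * Cf (t + 1)))
    (y : ℕ → Fin n → ℝ) (x₀ : Fin m → ℝ)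
    (x x' : ℕ → Fin m → ℝ)
    (hx0 : x 0 = x₀)
    (hx : ∀ t, x (t + 1) = x t + (K (t + 1)).mulVec (y (t + 1) - H.mulVec (x t)))
    (hx'0 : x' 0 = x₀)
    (hx' : ∀ t, x' (t + 1) = x' t + (K' (t + 1)).mulVec (y (t + 1) - H.mulVec (x' t))) :
    ∀ t, x' t = x t :=
  hikf_state_estimate_equivalence_general H R Q P₀ Pa Pf K Ca Cf K' hPa0 hPf hK hPa hCa0 hCf hK' hCa
    y x₀ x x' hx0 hx hx'0 hx'
end
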